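/- arXiv:2310.17031 — 5 statements merged into one kernel-verified Lean document; each statement's English description precedes it below -/
import Mathlib

section
/- The function β : ℕ → ℝ defined by β(1) = 0 and β(p) = tr(Z · Σ_{s=1}^{p-1} Y(s)) for p > 1, where Y(s) = Σ_{r=0}^{s-1} A^r W (A^T)^r with W positive semidefinite and Z positive semidefinite, is convex in the discrete sense: β(i) ≤ (β(i+1) + β(i-1))/2 for all integers i ≥ 2. -/
/-! The second difference β(i+1) - 2β(i) + β(i-1) equals tr(Z (Y(i) - Y(i-1))) =
tr(Z A^(i-1) W (A^(i-1))ᵀ), the trace of a product of two positive semidefinite matrices,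
which is nonnegative because tr(PQ) = tr(√Q P √Q). -/

open Matrix

open scoped MatrixOrder ComplexOrder in
theorem Matrix.PosSemidef.trace_mul_nonneg {m 𝕜 : Type*} [Fintype m] [RCLike 𝕜]
    {P Q : Matrix m m 𝕜} (hP : P.PosSemidef) (hQ : Q.PosSemidef) : 0 ≤ (P * Q).trace := by
  classical
  rw [← CFC.sqrt_mul_sqrt_self Q hQ.nonneg, ← Matrix.mul_assoc, trace_mul_cycle]
  have hS : (CFC.sqrt Q)ᴴ = CFC.sqrt Q := (CFC.sqrt_nonneg Q).isSelfAdjoint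
  simpa [hS] using (hP.mul_mul_conjTranspose_same (CFC.sqrt Q)).trace_nonneg

theorem stmt_0 (n : ℕ) (A W Z : Matrix (Fin n) (Fin n) ℝ)
    (hW : W.PosSemidef) (hZ : Z.PosSemidef)
    (Y : ℕ → Matrix (Fin n) (Fin n) ℝ)
    (hY : ∀ s, Y s = ∑ r ∈ Finset.range s, A ^ r * W * (Aᵀ) ^ r)
    (β : ℕ → ℝ)
    (hβ : ∀ p, β p = (Z * ∑ s ∈ Finset.Icc 1 (p - 1), Y s).trace) :
    ∀ i : ℕ, 2 ≤ i → β i ≤ (β (i + 1) + β (i - 1)) / 2 := by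
  have hβ_succ (k : ℕ) : β (k + 2) = β (k + 1) + (Z * Y (k + 1)).trace := by
    rw [hβ, hβ, show k + 2 - 1 = k + 1 from rfl, Nat.add_sub_cancel,
      Finset.sum_Icc_succ_top (by omega), Matrix.mul_add, trace_add]
  have hY_succ (k : ℕ) : Y (k + 1) = Y k + A ^ k * W * (A ^ k)ᵀ := by
    rw [hY, hY, Finset.sum_range_succ, transpose_pow]
  intro i hi
  obtain ⟨j, rfl⟩ : ∃ j, i = j + 2 := ⟨i - 2, by omega⟩
  have hgap : 0 ≤ (Z * (A ^ (j + 1) * W * (A ^ (j + 1))ᵀ)).trace :=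
    hZ.trace_mul_nonneg (by simpa using hW.mul_mul_conjTranspose_same (A ^ (j + 1)))
  have h₁ := hβ_succ j
  have h₂ := hβ_succ (j + 1)
  rw [hY_succ, Matrix.mul_add, trace_add] at h₂
  rw [show j + 2 - 1 = j + 1 from rfl]
  linarith
end

section
/- Suppose the map Φ(P) = F_o(F_a(P)), where F_a(P) = P + P(γ²I − P)⁻¹P and F_o(P) = AᵀPA + Q, is applied iteratively: M₁ = P̄, M_{k+1} = Φ(M_k). If P̄ satisfies the Riccati fixed point P̄ = F_c(F_a(P̄)) with F_c(P) = AᵀPA + Q − AᵀPB(BᵀPB + R)⁻¹BᵀPA, R positive definite, and γ²I − M_k ≻ 0 for all k ∈ {1,…,h}, then M_{k+1} ⪰ M_k for all k ∈ {1,…,h−1}. -/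
/-!
Writing `c = γ²`, the map `F_a` is `P ↦ c² (cI - P)⁻¹ - cI`, so it is monotone on
`{P | cI - P ≻ 0}` because matrix inversion is antitone on positive definite matrices;
`F_o` is monotone by congruence, so `M_{k+1} ⪰ M_k` passes from `k` to `k + 1`.
The induction starts because `M₂ - M₁ = F_o(S) - F_c(S) = AᵀSB (BᵀSB + R)⁻¹ BᵀSA ⪰ 0`
with `S = F_a(P̄) ⪰ 0`.
-/

open Matrix

namespace Matrix

variable {ι κ : Type*} [Fintype ι] [Fintype κ]

theorem PosSemidef.transpose_mul_mul_same {A : Matrix ι ι ℝ} (hA : A.PosSemidef)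
    (B : Matrix ι κ ℝ) : (Bᵀ * A * B).PosSemidef := by
  simpa only [conjTranspose_eq_transpose_of_trivial] using hA.conjTranspose_mul_mul_same B

open scoped ComplexOrder in
theorem PosDef.posSemidef_inv_sub_inv {𝕜 : Type*} [RCLike 𝕜] [DecidableEq ι]
    {P Q : Matrix ι ι 𝕜} (hQ : Q.PosDef) (hPQ : (P - Q).PosSemidef) :
    (Q⁻¹ - P⁻¹).PosSemidef := by
  have hP : P.PosDef := by simpa using hQ.add_posSemidef hPQ
  have hQinv : Q⁻¹.PosDef := hQ.inv
  let := hP.isUnit.invertible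
  let := hQinv.isUnit.invertible
  -- Both Schur complements of the block matrix `[[P, 1], [1, Q⁻¹]]`.
  have hblock : (fromBlocks P 1 (1 : Matrix ι ι 𝕜)ᴴ Q⁻¹).PosSemidef := by
    rw [PosDef.fromBlocks₂₂ _ _ hQinv]
    simpa [nonsing_inv_nonsing_inv _ ((isUnit_iff_isUnit_det Q).mp hQ.isUnit)] using hPQ
  rw [PosDef.fromBlocks₁₁ _ _ hP] at hblock
  simpa using hblock

end Matrix

section AttenuationMap

variable {ι : Type*} [Fintype ι] [DecidableEq ι]

theorem sub_add_sub_mul_inv_mul_sub (c : ℝ) {G : Matrix ι ι ℝ} (hG : IsUnit G.det) :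
    (c • 1 - G) + (c • 1 - G) * G⁻¹ * (c • 1 - G) = (c * c) • G⁻¹ - c • (1 : Matrix ι ι ℝ) := by
  simp only [Matrix.sub_mul, Matrix.mul_sub, smul_mul_assoc, mul_smul_comm, Matrix.one_mul,
    Matrix.mul_one, mul_nonsing_inv _ hG, nonsing_inv_mul _ hG, smul_sub, smul_smul]
  module

/-- The map `F_a` of the statement, with `c = γ²`. -/
noncomputable def attenuationMap (c : ℝ) (P : Matrix ι ι ℝ) : Matrix ι ι ℝ :=
  P + P * (c • (1 : Matrix ι ι ℝ) - P)⁻¹ * P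

theorem attenuationMap_eq {c : ℝ} {P : Matrix ι ι ℝ} (hG : IsUnit (c • (1 : Matrix ι ι ℝ) - P)) :
    attenuationMap c P = (c * c) • (c • (1 : Matrix ι ι ℝ) - P)⁻¹ - c • 1 := by
  simpa only [attenuationMap, sub_sub_cancel] using
    sub_add_sub_mul_inv_mul_sub c ((isUnit_iff_isUnit_det _).mp hG)

theorem attenuationMap_posSemidef {c : ℝ} {P : Matrix ι ι ℝ} (hP : P.PosSemidef)
    (hG : (c • (1 : Matrix ι ι ℝ) - P).PosDef) : (attenuationMap c P).PosSemidef := by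
  have h := hG.inv.posSemidef.transpose_mul_mul_same P
  rw [← conjTranspose_eq_transpose_of_trivial, hP.isHermitian.eq] at h
  exact hP.add h

theorem attenuationMap_sub_posSemidef {c : ℝ} {P P' : Matrix ι ι ℝ}
    (hPP' : (P' - P).PosSemidef) (hG' : (c • (1 : Matrix ι ι ℝ) - P').PosDef) :
    (attenuationMap c P' - attenuationMap c P).PosSemidef := by
  have hG : (c • (1 : Matrix ι ι ℝ) - P).PosDef := by
    simpa using hG'.add_posSemidef hPP'
  have hinv : ((c • 1 - P')⁻¹ - (c • 1 - P)⁻¹).PosSemidef :=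
    hG'.posSemidef_inv_sub_inv (by simpa using hPP')
  rw [attenuationMap_eq hG'.isUnit, attenuationMap_eq hG.isUnit, sub_sub_sub_cancel_right,
    ← smul_sub]
  exact hinv.smul (mul_self_nonneg c)

end AttenuationMap

theorem posSemidef_riccati_correction {ι κ : Type*} [Fintype ι] [Fintype κ] [DecidableEq κ]
    (A S : Matrix ι ι ℝ) (B : Matrix ι κ ℝ) {R : Matrix κ κ ℝ}
    (hS : S.PosSemidef) (hR : R.PosDef) :
    (Aᵀ * S * B * (Bᵀ * S * B + R)⁻¹ * Bᵀ * S * A).PosSemidef := by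
  have hW : (Bᵀ * S * B + R).PosDef := PosDef.posSemidef_add (hS.transpose_mul_mul_same B) hR
  have h := hW.inv.posSemidef.transpose_mul_mul_same (Bᵀ * S * A)
  have hSt : Sᵀ = S := by rw [← conjTranspose_eq_transpose_of_trivial, hS.isHermitian.eq]
  simpa only [transpose_mul, transpose_transpose, hSt, Matrix.mul_assoc] using h

theorem stmt_10_general (n m : ℕ)
    (A Q : Matrix (Fin n) (Fin n) ℝ) (B : Matrix (Fin n) (Fin m) ℝ)
    (R : Matrix (Fin m) (Fin m) ℝ) (hR : R.PosDef)
    (γ : ℝ)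
    (Fa Fo Fc : Matrix (Fin n) (Fin n) ℝ → Matrix (Fin n) (Fin n) ℝ)
    (hFa : ∀ P, Fa P = P + P * (γ ^ 2 • (1 : Matrix (Fin n) (Fin n) ℝ) - P)⁻¹ * P)
    (hFo : ∀ P, Fo P = Aᵀ * P * A + Q)
    (hFc : ∀ P, Fc P = Aᵀ * P * A + Q - Aᵀ * P * B * (Bᵀ * P * B + R)⁻¹ * Bᵀ * P * A)
    (Pbar : Matrix (Fin n) (Fin n) ℝ) (hPbar : Pbar.PosDef)
    (hfix : Pbar = Fc (Fa Pbar))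
    (h : ℕ) (M : ℕ → Matrix (Fin n) (Fin n) ℝ)
    (hM1 : M 1 = Pbar) (hMiter : ∀ k, M (k + 1) = Fo (Fa (M k)))
    (hpd : ∀ k, 1 ≤ k → k ≤ h → (γ ^ 2 • (1 : Matrix (Fin n) (Fin n) ℝ) - M k).PosDef) :
    ∀ k, 1 ≤ k → k ≤ h - 1 → (M (k + 1) - M k).PosSemidef := by
  have hFa' : ∀ P, Fa P = attenuationMap (γ ^ 2) P := hFa
  intro k hk
  induction k, hk using Nat.le_induction with
  | base =>
    intro hh
    have hG : (γ ^ 2 • (1 : Matrix (Fin n) (Fin n) ℝ) - Pbar).PosDef :=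
      hM1 ▸ hpd 1 le_rfl (by omega)
    have hS : (Fa Pbar).PosSemidef :=
      hFa' Pbar ▸ attenuationMap_posSemidef hPbar.posSemidef hG
    have hdiff : M (1 + 1) - M 1 = Fo (Fa Pbar) - Fc (Fa Pbar) := by rw [hMiter 1, hM1, ← hfix]
    rw [hdiff, hFo, hFc, sub_sub_cancel]
    exact posSemidef_riccati_correction A _ B hS hR
  | succ k hk ih =>
    intro hkh
    have hFa_sub : (Fa (M (k + 1)) - Fa (M k)).PosSemidef := by
      rw [hFa', hFa']
      exact attenuationMap_sub_posSemidef (ih (by omega)) (hpd (k + 1) (by omega) (by omega))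
    rw [hMiter (k + 1)]
    nth_rw 2 [hMiter k]
    rw [hFo, hFo, add_sub_add_right_eq_sub, ← Matrix.sub_mul, ← Matrix.mul_sub]
    exact hFa_sub.transpose_mul_mul_same A

theorem stmt_10 (n m : ℕ)
    (A Q : Matrix (Fin n) (Fin n) ℝ) (B : Matrix (Fin n) (Fin m) ℝ)
    (R : Matrix (Fin m) (Fin m) ℝ) (hQ : Q.PosSemidef) (hR : R.PosDef)
    (γ : ℝ) (hγ : 0 < γ)
    (Fa Fo Fc : Matrix (Fin n) (Fin n) ℝ → Matrix (Fin n) (Fin n) ℝ)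
    (hFa : ∀ P, Fa P = P + P * (γ ^ 2 • (1 : Matrix (Fin n) (Fin n) ℝ) - P)⁻¹ * P)
    (hFo : ∀ P, Fo P = Aᵀ * P * A + Q)
    (hFc : ∀ P, Fc P = Aᵀ * P * A + Q - Aᵀ * P * B * (Bᵀ * P * B + R)⁻¹ * Bᵀ * P * A)
    (Pbar : Matrix (Fin n) (Fin n) ℝ) (hPbar : Pbar.PosDef)
    (hfix : Pbar = Fc (Fa Pbar))
    (h : ℕ) (M : ℕ → Matrix (Fin n) (Fin n) ℝ)
    (hM1 : M 1 = Pbar) (hMiter : ∀ k, M (k + 1) = Fo (Fa (M k)))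
    (hpd : ∀ k, 1 ≤ k → k ≤ h → (γ ^ 2 • (1 : Matrix (Fin n) (Fin n) ℝ) - M k).PosDef) :
    ∀ k, 1 ≤ k → k ≤ h - 1 → (M (k + 1) - M k).PosSemidef :=
  stmt_10_general n m A Q B R hR γ Fa Fo Fc hFa hFo hFc Pbar hPbar hfix h M hM1 hMiter hpd
end

section
/- For symmetric matrices 0 ⪯ P₁ ⪯ P₂ with γ²I − P₂ ≻ 0, the composed Riccati map satisfies F_c(F_a(P₁)) ⪯ F_c(F_a(P₂)), where F_a(P) = P + P(γ²I−P)⁻¹P and F_c(P) = AᵀPA + Q − AᵀPB(BᵀPB+R)⁻¹BᵀPA with R ≻ 0. -/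
/-!
Both maps are monotone in the Loewner order. With `S = γ²I - P` one has
`F_a(P) = γ⁴ S⁻¹ - γ² I`, and inversion is antitone on positive definite matrices. Completing the
square gives `F_c(P) = min_K [(A - BK)ᵀ P (A - BK) + Q + Kᵀ R K]`, the minimum being attained at
`K = (BᵀPB + R)⁻¹ BᵀPA`; each term is monotone in `P`, hence so is the minimum. Finally
`F_a(P₁) ⪰ F_a(0) = 0` keeps `Bᵀ F_a(P₁) B + R` positive definite.
-/

open Matrix
open scoped MatrixOrder ComplexOrder

namespace Matrix

theorem transpose_mul_mul_sub_eq {l m α : Type*} [Fintype m] [DecidableEq m] [CommRing α]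
    {S : Matrix m m α} (hS : S.IsSymm) (hdet : IsUnit S.det) (K G : Matrix m l α) :
    Kᵀ * S * K - Kᵀ * G - Gᵀ * K = (K - S⁻¹ * G)ᵀ * S * (K - S⁻¹ * G) - Gᵀ * S⁻¹ * G := by
  have hSinv : S⁻¹ᵀ = S⁻¹ := by rw [transpose_nonsing_inv, hS.eq]
  simp only [transpose_sub, transpose_mul, hSinv, Matrix.sub_mul, Matrix.mul_sub,
    Matrix.mul_assoc, mul_nonsing_inv_cancel_left _ _ hdet, nonsing_inv_mul_cancel_left _ _ hdet]
  abel

variable {n 𝕜 : Type*} [RCLike 𝕜]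

theorem PosDef.of_le {S T : Matrix n n 𝕜} (hS : S.PosDef) (h : S ≤ T) : T.PosDef := by
  simpa using hS.add_posSemidef h

theorem PosDef.inv_le_inv [Fintype n] [DecidableEq n] {S T : Matrix n n 𝕜} (hS : S.PosDef)
    (h : S ≤ T) : T⁻¹ ≤ S⁻¹ := by
  have hT := hS.of_le h
  have := hT.isUnit.invertible
  have := hS.inv.isUnit.invertible
  -- `[[T, 1], [1, S⁻¹]]` is positive semidefinite iff either Schur complement is.
  have hblock : (fromBlocks T 1 (1 : Matrix n n 𝕜)ᴴ S⁻¹).PosSemidef := by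
    rw [PosDef.fromBlocks₂₂ T 1 hS.inv, nonsing_inv_nonsing_inv _ hS.det_pos.ne'.isUnit]
    simpa using le_iff.mp h
  rw [PosDef.fromBlocks₁₁ 1 S⁻¹ hT] at hblock
  rw [le_iff]
  simpa using hblock

theorem PosSemidef.transpose_mul_mul_same_s11 {l : Type*} [Fintype n] [Finite l] {P : Matrix n n ℝ}
    (hP : P.PosSemidef) (X : Matrix n l ℝ) : (Xᵀ * P * X).PosSemidef := by
  simpa [conjTranspose_eq_transpose_of_trivial] using hP.conjTranspose_mul_mul_same X

end Matrix

noncomputable section Riccati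

variable {n m : Type*} [Fintype n] [Fintype m]
  (A Q : Matrix n n ℝ) (B : Matrix n m ℝ) (R : Matrix m m ℝ)

/-- `xᵀ (closedLoopCost P K) x` is the cost `xᵀQx + uᵀRu + yᵀPy` of the feedback `u = -K x`,
where `y = A x + B u`. -/
def closedLoopCost (P : Matrix n n ℝ) (K : Matrix m n ℝ) : Matrix n n ℝ :=
  (A - B * K)ᵀ * P * (A - B * K) + Q + Kᵀ * R * K

theorem closedLoopCost_mono {P₁ P₂ : Matrix n n ℝ} (h : P₁ ≤ P₂) (K : Matrix m n ℝ) :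
    closedLoopCost A Q B R P₁ K ≤ closedLoopCost A Q B R P₂ K := by
  have hdiff : closedLoopCost A Q B R P₂ K - closedLoopCost A Q B R P₁ K =
      (A - B * K)ᵀ * (P₂ - P₁) * (A - B * K) := by
    simp only [closedLoopCost, Matrix.mul_sub, Matrix.sub_mul]
    abel
  rw [le_iff, hdiff]
  exact (le_iff.mp h).transpose_mul_mul_same_s11 _

variable [DecidableEq m]

def riccatiFc (P : Matrix n n ℝ) : Matrix n n ℝ :=
  Aᵀ * P * A + Q - Aᵀ * P * B * (Bᵀ * P * B + R)⁻¹ * Bᵀ * P * A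

def riccatiGain (P : Matrix n n ℝ) : Matrix m n ℝ :=
  (Bᵀ * P * B + R)⁻¹ * (Bᵀ * P * A)

theorem closedLoopCost_eq {P : Matrix n n ℝ} (hP : P.IsSymm) (hS : (Bᵀ * P * B + R).IsSymm)
    (hdet : IsUnit (Bᵀ * P * B + R).det) (K : Matrix m n ℝ) :
    closedLoopCost A Q B R P K = riccatiFc A Q B R P +
      (K - riccatiGain A B R P)ᵀ * (Bᵀ * P * B + R) * (K - riccatiGain A B R P) := by
  have hsq := transpose_mul_mul_sub_eq hS hdet K (Bᵀ * P * A)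
  rw [transpose_mul, transpose_mul, transpose_transpose, hP.eq] at hsq
  rw [riccatiGain, riccatiFc, sub_eq_iff_eq_add.mp hsq.symm]
  simp only [closedLoopCost, transpose_sub, transpose_mul, Matrix.sub_mul, Matrix.mul_sub,
    Matrix.mul_add, Matrix.add_mul, Matrix.mul_assoc]
  abel

theorem riccatiFc_le_closedLoopCost {P : Matrix n n ℝ} (hP : P.IsHermitian)
    (hS : (Bᵀ * P * B + R).PosDef) (K : Matrix m n ℝ) :
    riccatiFc A Q B R P ≤ closedLoopCost A Q B R P K := by
  rw [closedLoopCost_eq A Q B R (isHermitian_iff_isSymm.mp hP)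
    (isHermitian_iff_isSymm.mp hS.isHermitian) hS.det_pos.ne'.isUnit, le_add_iff_nonneg_right]
  exact (hS.posSemidef.transpose_mul_mul_same_s11 _).nonneg

theorem closedLoopCost_riccatiGain {P : Matrix n n ℝ} (hP : P.IsHermitian)
    (hS : (Bᵀ * P * B + R).PosDef) :
    closedLoopCost A Q B R P (riccatiGain A B R P) = riccatiFc A Q B R P := by
  rw [closedLoopCost_eq A Q B R (isHermitian_iff_isSymm.mp hP)
    (isHermitian_iff_isSymm.mp hS.isHermitian) hS.det_pos.ne'.isUnit, sub_self, Matrix.mul_zero,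
    add_zero]

theorem riccatiFc_mono {P₁ P₂ : Matrix n n ℝ} (hP₁ : P₁.IsHermitian)
    (hS₁ : (Bᵀ * P₁ * B + R).PosDef) (h : P₁ ≤ P₂) :
    riccatiFc A Q B R P₁ ≤ riccatiFc A Q B R P₂ := by
  have hP₂ : P₂.IsHermitian := by simpa using hP₁.add (le_iff.mp h).isHermitian
  have hS₂ : (Bᵀ * P₂ * B + R).PosDef := hS₁.of_le <| by
    simpa [le_iff, Matrix.mul_sub, Matrix.sub_mul] using (le_iff.mp h).transpose_mul_mul_same_s11 B
  calc riccatiFc A Q B R P₁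
      ≤ closedLoopCost A Q B R P₁ (riccatiGain A B R P₂) :=
        riccatiFc_le_closedLoopCost A Q B R hP₁ hS₁ _
    _ ≤ closedLoopCost A Q B R P₂ (riccatiGain A B R P₂) := closedLoopCost_mono A Q B R h _
    _ = riccatiFc A Q B R P₂ := closedLoopCost_riccatiGain A Q B R hP₂ hS₂

end Riccati

noncomputable section

variable {n : Type*} [Fintype n] [DecidableEq n]

def riccatiFa (γ : ℝ) (P : Matrix n n ℝ) : Matrix n n ℝ :=
  P + P * (γ ^ 2 • 1 - P)⁻¹ * P

theorem riccatiFa_eq {γ : ℝ} {P : Matrix n n ℝ} (h : IsUnit (γ ^ 2 • 1 - P).det) :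
    riccatiFa γ P = γ ^ 4 • (γ ^ 2 • 1 - P)⁻¹ - γ ^ 2 • 1 := by
  obtain ⟨S, rfl⟩ : ∃ S, P = γ ^ 2 • 1 - S := ⟨γ ^ 2 • 1 - P, by abel⟩
  rw [sub_sub_cancel] at h
  rw [riccatiFa, sub_sub_cancel]
  simp only [Matrix.sub_mul, Matrix.mul_sub, Matrix.smul_mul, Matrix.mul_smul,
    Matrix.one_mul, Matrix.mul_one, mul_nonsing_inv _ h, nonsing_inv_mul _ h]
  module

theorem riccatiFa_mono {γ : ℝ} {P₁ P₂ : Matrix n n ℝ} (h : P₁ ≤ P₂)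
    (hγ : (γ ^ 2 • 1 - P₂).PosDef) : riccatiFa γ P₁ ≤ riccatiFa γ P₂ := by
  have hS : γ ^ 2 • 1 - P₂ ≤ γ ^ 2 • 1 - P₁ := sub_le_sub_left h _
  rw [riccatiFa_eq hγ.det_pos.ne'.isUnit, riccatiFa_eq (hγ.of_le hS).det_pos.ne'.isUnit,
    sub_le_sub_iff_right, le_iff, ← smul_sub]
  exact (le_iff.mp (hγ.inv_le_inv hS)).smul (by positivity)

theorem riccatiFa_nonneg {γ : ℝ} {P : Matrix n n ℝ} (hP : 0 ≤ P) (hγ : (γ ^ 2 • 1 - P).PosDef) :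
    0 ≤ riccatiFa γ P := by
  simpa [riccatiFa] using riccatiFa_mono hP hγ

end

theorem stmt_11_general (n m : ℕ)
    (A Q : Matrix (Fin n) (Fin n) ℝ) (B : Matrix (Fin n) (Fin m) ℝ)
    (R : Matrix (Fin m) (Fin m) ℝ) (hR : R.PosDef)
    (γ : ℝ)
    (Fa Fc : Matrix (Fin n) (Fin n) ℝ → Matrix (Fin n) (Fin n) ℝ)
    (hFa : ∀ P, Fa P = P + P * (γ ^ 2 • (1 : Matrix (Fin n) (Fin n) ℝ) - P)⁻¹ * P)
    (hFc : ∀ P, Fc P = Aᵀ * P * A + Q - Aᵀ * P * B * (Bᵀ * P * B + R)⁻¹ * Bᵀ * P * A)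
    (P₁ P₂ : Matrix (Fin n) (Fin n) ℝ)
    (hP₁ : P₁.PosSemidef) (h12 : (P₂ - P₁).PosSemidef)
    (hγ2 : (γ ^ 2 • (1 : Matrix (Fin n) (Fin n) ℝ) - P₂).PosDef) :
    (Fc (Fa P₂) - Fc (Fa P₁)).PosSemidef := by
  obtain rfl : Fa = riccatiFa γ := funext hFa
  obtain rfl : Fc = riccatiFc A Q B R := funext hFc
  have hFa₁ : 0 ≤ riccatiFa γ P₁ :=
    riccatiFa_nonneg hP₁.nonneg (hγ2.of_le (sub_le_sub_left (le_iff.mpr h12) _))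
  exact riccatiFc_mono A Q B R hFa₁.posSemidef.isHermitian
    (hR.posSemidef_add (hFa₁.posSemidef.transpose_mul_mul_same_s11 B))
    (riccatiFa_mono (le_iff.mpr h12) hγ2)

theorem stmt_11 (n m : ℕ)
    (A Q : Matrix (Fin n) (Fin n) ℝ) (B : Matrix (Fin n) (Fin m) ℝ)
    (R : Matrix (Fin m) (Fin m) ℝ) (hQ : Q.PosSemidef) (hR : R.PosDef)
    (γ : ℝ) (hγ : 0 < γ)
    (Fa Fc : Matrix (Fin n) (Fin n) ℝ → Matrix (Fin n) (Fin n) ℝ)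
    (hFa : ∀ P, Fa P = P + P * (γ ^ 2 • (1 : Matrix (Fin n) (Fin n) ℝ) - P)⁻¹ * P)
    (hFc : ∀ P, Fc P = Aᵀ * P * A + Q - Aᵀ * P * B * (Bᵀ * P * B + R)⁻¹ * Bᵀ * P * A)
    (P₁ P₂ : Matrix (Fin n) (Fin n) ℝ)
    (hP₁ : P₁.PosSemidef) (h12 : (P₂ - P₁).PosSemidef)
    (hγ2 : (γ ^ 2 • (1 : Matrix (Fin n) (Fin n) ℝ) - P₂).PosDef) :
    (Fc (Fa P₂) - Fc (Fa P₁)).PosSemidef :=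
  stmt_11_general n m A Q B R hR γ Fa Fc hFa hFc P₁ P₂ hP₁ h12 hγ2
end

section
/- For a symmetric matrix P with 0 ⪯ P and γ²I − P ≻ 0, and for any vectors x, u, the maximum over w of [−γ²wᵀw + (Ax+Bu+w)ᵀP(Ax+Bu+w)] is attained at w* = (γ²I−P)⁻¹P(Ax+Bu) and equals (Ax+Bu)ᵀF_a(P)(Ax+Bu), where F_a(P) = P + P(γ²I−P)⁻¹P. -/
/-! Since `P` is symmetric and `(γ²I - P) w⋆ = P v`, completing the square in `w` gives
`-γ² wᵀw + (v + w)ᵀP(v + w) = vᵀP(v + w⋆) - (w - w⋆)ᵀ(γ²I - P)(w - w⋆)`,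
and `vᵀP(v + w⋆) = vᵀ(P + P(γ²I - P)⁻¹P)v`. The subtracted term is a nonnegative quadratic form
vanishing at `w = w⋆`. -/

open Matrix

namespace Matrix

variable {ι R : Type*} [Fintype ι] [DecidableEq ι] [CommRing R]

theorem neg_mul_dotProduct_self_add_dotProduct_mulVec_eq {P : Matrix ι ι R} (hP : P.IsSymm)
    (c : R) {v w₀ : ι → R} (hw₀ : (c • 1 - P) *ᵥ w₀ = P *ᵥ v) (w : ι → R) :
    -c * (w ⬝ᵥ w) + (v + w) ⬝ᵥ P *ᵥ (v + w) =
      v ⬝ᵥ P *ᵥ (v + w₀) - (w - w₀) ⬝ᵥ (c • 1 - P) *ᵥ (w - w₀) := by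
  have symm : ∀ x y : ι → R, x ⬝ᵥ P *ᵥ y = y ⬝ᵥ P *ᵥ x := fun x y => by
    simpa only [hP.eq] using dotProduct_transpose_mulVec P x y
  have hw₀' : ∀ x, c * (x ⬝ᵥ w₀) - x ⬝ᵥ P *ᵥ w₀ = x ⬝ᵥ P *ᵥ v := fun x => by
    rw [← hw₀, sub_mulVec, smul_mulVec, one_mulVec, dotProduct_sub, dotProduct_smul, smul_eq_mul]
  simp only [mulVec_add, mulVec_sub, sub_mulVec, smul_mulVec, one_mulVec, dotProduct_add,
    add_dotProduct, dotProduct_sub, sub_dotProduct, dotProduct_smul, smul_eq_mul]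
  linear_combination symm v w - 2 * hw₀' w + hw₀' w₀ - symm v w₀ - symm w w₀ +
    c * dotProduct_comm w w₀

end Matrix

theorem stmt_12_general (n : ℕ)
    (γ : ℝ)
    (P : Matrix (Fin n) (Fin n) ℝ) (hP : P.PosSemidef)
    (hγP : (γ ^ 2 • (1 : Matrix (Fin n) (Fin n) ℝ) - P).PosDef)
    (Fa : Matrix (Fin n) (Fin n) ℝ → Matrix (Fin n) (Fin n) ℝ)
    (hFa : ∀ X, Fa X = X + X * (γ ^ 2 • (1 : Matrix (Fin n) (Fin n) ℝ) - X)⁻¹ * X)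
    (v : Fin n → ℝ)
    (wstar : Fin n → ℝ)
    (hw : wstar = (γ ^ 2 • (1 : Matrix (Fin n) (Fin n) ℝ) - P)⁻¹ *ᵥ (P *ᵥ v)) :
    (∀ w : Fin n → ℝ,
        -(γ ^ 2) * (w ⬝ᵥ w) + (v + w) ⬝ᵥ (P *ᵥ (v + w)) ≤ v ⬝ᵥ (Fa P *ᵥ v)) ∧
      -(γ ^ 2) * (wstar ⬝ᵥ wstar) + (v + wstar) ⬝ᵥ (P *ᵥ (v + wstar)) =
        v ⬝ᵥ (Fa P *ᵥ v) := by
  have hwstar : (γ ^ 2 • 1 - P) *ᵥ wstar = P *ᵥ v := by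
    rw [hw, mulVec_mulVec, mul_nonsing_inv _ (isUnit_iff_isUnit_det _ |>.mp hγP.isUnit),
      one_mulVec]
  have hFaP : v ⬝ᵥ Fa P *ᵥ v = v ⬝ᵥ P *ᵥ (v + wstar) := by
    rw [hFa, add_mulVec, mulVec_add, Matrix.mul_assoc, ← mulVec_mulVec, ← mulVec_mulVec, ← hw]
  have hsq := neg_mul_dotProduct_self_add_dotProduct_mulVec_eq
    (isHermitian_iff_isSymm.mp hP.isHermitian) _ hwstar
  refine ⟨fun w => ?_, ?_⟩
  · rw [hsq, hFaP]
    exact sub_le_self _ (hγP.posSemidef.dotProduct_mulVec_nonneg (w - wstar))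
  · rw [hsq, hFaP, sub_self, zero_dotProduct, sub_zero]

theorem stmt_12 (n m : ℕ)
    (A : Matrix (Fin n) (Fin n) ℝ) (B : Matrix (Fin n) (Fin m) ℝ)
    (γ : ℝ) (hγ : 0 < γ)
    (P : Matrix (Fin n) (Fin n) ℝ) (hP : P.PosSemidef)
    (hγP : (γ ^ 2 • (1 : Matrix (Fin n) (Fin n) ℝ) - P).PosDef)
    (Fa : Matrix (Fin n) (Fin n) ℝ → Matrix (Fin n) (Fin n) ℝ)
    (hFa : ∀ X, Fa X = X + X * (γ ^ 2 • (1 : Matrix (Fin n) (Fin n) ℝ) - X)⁻¹ * X)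
    (x : Fin n → ℝ) (u : Fin m → ℝ) (v : Fin n → ℝ)
    (hv : v = A *ᵥ x + B *ᵥ u)
    (wstar : Fin n → ℝ)
    (hw : wstar = (γ ^ 2 • (1 : Matrix (Fin n) (Fin n) ℝ) - P)⁻¹ *ᵥ (P *ᵥ v)) :
    (∀ w : Fin n → ℝ,
        -(γ ^ 2) * (w ⬝ᵥ w) + (v + w) ⬝ᵥ (P *ᵥ (v + w)) ≤ v ⬝ᵥ (Fa P *ᵥ v)) ∧
      -(γ ^ 2) * (wstar ⬝ᵥ wstar) + (v + wstar) ⬝ᵥ (P *ᵥ (v + wstar)) =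
        v ⬝ᵥ (Fa P *ᵥ v) :=
  stmt_12_general n γ P hP hγP Fa hFa v wstar hw
end

section
/- For a symmetric matrix M with 0 ⪯ M and γ²I − M ≻ 0, F_a(M) = P + P(γ²I−P)⁻¹P satisfies F_a(M) ⪰ M, and xᵀF_o(F_a(M))x = xᵀQx + max_w (Ax+w)ᵀM(Ax+w) − γ²wᵀw for every x, where F_o(P) = AᵀPA + Q; consequently M ⪯ N with γ²I − N ≻ 0 implies F_o(F_a(M)) ⪯ F_o(F_a(N)). -/
/-!
Completing the square in `w` gives, for `S = γ²I − P ≻ 0`,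
`(v + w)ᵀP(v + w) − γ²wᵀw = vᵀ(P + PS⁻¹P)v − (w − S⁻¹Pv)ᵀS(w − S⁻¹Pv)`,
so `vᵀF_a(P)v` (`F_a` is `adversaryUpdate γ`) is the maximum over `w` of the left-hand side, attained at `w = S⁻¹Pv`.
A pointwise maximum of functions that are monotone in `P` is monotone in `P`, hence `F_a` is
monotone on `{P | γ²I − P ≻ 0}`, and `F_o` is monotone because `F_o(N) − F_o(M) = Aᵀ(N − M)A`.
-/

open Matrix

variable {ι : Type*} [Fintype ι]

lemma Matrix.IsHermitian.dotProduct_mulVec_comm {B : Matrix ι ι ℝ} (hB : B.IsHermitian)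
    (a b : ι → ℝ) : a ⬝ᵥ (B *ᵥ b) = b ⬝ᵥ (B *ᵥ a) := by
  rw [dotProduct_mulVec, ← mulVec_transpose, isHermitian_iff_isSymm.mp hB, dotProduct_comm]

lemma dotProduct_transpose_mul_mul_mulVec (A B : Matrix ι ι ℝ) (x : ι → ℝ) :
    x ⬝ᵥ ((Aᵀ * B * A) *ᵥ x) = (A *ᵥ x) ⬝ᵥ (B *ᵥ (A *ᵥ x)) := by
  rw [← mulVec_mulVec, ← mulVec_mulVec, dotProduct_mulVec, vecMul_transpose]

lemma Matrix.PosSemidef.transpose_mul_mul_same_s13 {D : Matrix ι ι ℝ} (hD : D.PosSemidef)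
    (A : Matrix ι ι ℝ) : (Aᵀ * D * A).PosSemidef := by
  simpa only [conjTranspose_eq_transpose_of_trivial] using hD.conjTranspose_mul_mul_same A

variable [DecidableEq ι]

noncomputable def adversaryUpdate (γ : ℝ) (P : Matrix ι ι ℝ) : Matrix ι ι ℝ :=
  P + P * (γ ^ 2 • (1 : Matrix ι ι ℝ) - P)⁻¹ * P

lemma posSemidef_mul_inv_mul {P S : Matrix ι ι ℝ} (hP : P.IsHermitian) (hS : S.PosDef) :
    (P * S⁻¹ * P).PosSemidef := by
  simpa only [hP.eq] using hS.inv.posSemidef.mul_mul_conjTranspose_same P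

lemma adversaryUpdate_sub_self {γ : ℝ} {P : Matrix ι ι ℝ} (hP : P.IsHermitian)
    (hγP : (γ ^ 2 • (1 : Matrix ι ι ℝ) - P).PosDef) :
    (adversaryUpdate γ P - P).PosSemidef := by
  simpa only [adversaryUpdate, add_sub_cancel_left] using posSemidef_mul_inv_mul hP hγP

lemma quadratic_sub_eq_adversaryUpdate_sub_sq {γ : ℝ} {P : Matrix ι ι ℝ} (hP : P.IsHermitian)
    (hS : IsUnit (γ ^ 2 • (1 : Matrix ι ι ℝ) - P).det) (v w : ι → ℝ) :
    (v + w) ⬝ᵥ (P *ᵥ (v + w)) - γ ^ 2 * (w ⬝ᵥ w)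
      = v ⬝ᵥ (adversaryUpdate γ P *ᵥ v)
        - (w - (γ ^ 2 • (1 : Matrix ι ι ℝ) - P)⁻¹ *ᵥ (P *ᵥ v)) ⬝ᵥ
          ((γ ^ 2 • (1 : Matrix ι ι ℝ) - P) *ᵥ
            (w - (γ ^ 2 • (1 : Matrix ι ι ℝ) - P)⁻¹ *ᵥ (P *ᵥ v))) := by
  set S : Matrix ι ι ℝ := γ ^ 2 • (1 : Matrix ι ι ℝ) - P with hSdef
  have hSherm : S.IsHermitian := (isHermitian_one.smul (.all _)).sub hP
  set w₀ : ι → ℝ := S⁻¹ *ᵥ (P *ᵥ v)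
  have hSw₀ : S *ᵥ w₀ = P *ᵥ v := by rw [mulVec_mulVec, mul_nonsing_inv S hS, one_mulVec]
  have hw₀P : w₀ ⬝ᵥ (P *ᵥ v) = v ⬝ᵥ ((P * S⁻¹ * P) *ᵥ v) := by
    rw [← mulVec_mulVec, ← mulVec_mulVec, hP.dotProduct_mulVec_comm, dotProduct_comm]
  have hw₀S : w₀ ⬝ᵥ (S *ᵥ w) = w ⬝ᵥ (P *ᵥ v) := by rw [hSherm.dotProduct_mulVec_comm, hSw₀]
  have hwS : w ⬝ᵥ (S *ᵥ w) = γ ^ 2 * (w ⬝ᵥ w) - w ⬝ᵥ (P *ᵥ w) := by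
    rw [hSdef, sub_mulVec, smul_mulVec, one_mulVec, dotProduct_sub, dotProduct_smul, smul_eq_mul]
  rw [adversaryUpdate, add_mulVec, dotProduct_add, mulVec_add, add_dotProduct, dotProduct_add,
    dotProduct_add, mulVec_sub, dotProduct_sub, sub_dotProduct, sub_dotProduct, hSw₀, hw₀S, hwS,
    hP.dotProduct_mulVec_comm v w, ← hw₀P]
  ring

lemma isGreatest_adversaryUpdate {γ : ℝ} {P : Matrix ι ι ℝ} (hP : P.IsHermitian)
    (hγP : (γ ^ 2 • (1 : Matrix ι ι ℝ) - P).PosDef) (v : ι → ℝ) :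
    IsGreatest (Set.range fun w : ι → ℝ => (v + w) ⬝ᵥ (P *ᵥ (v + w)) - γ ^ 2 * (w ⬝ᵥ w))
      (v ⬝ᵥ (adversaryUpdate γ P *ᵥ v)) := by
  have hS := hγP.det_pos.ne'.isUnit
  refine ⟨⟨(γ ^ 2 • (1 : Matrix ι ι ℝ) - P)⁻¹ *ᵥ (P *ᵥ v), ?_⟩, ?_⟩
  · simp only [quadratic_sub_eq_adversaryUpdate_sub_sq hP hS, sub_self, mulVec_zero,
      dotProduct_zero, sub_zero]
  · rintro _ ⟨w, rfl⟩
    dsimp only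
    rw [quadratic_sub_eq_adversaryUpdate_sub_sq hP hS, sub_le_self_iff]
    simpa only [star_trivial] using hγP.posSemidef.dotProduct_mulVec_nonneg _

lemma adversaryUpdate_mono {γ : ℝ} {M N : Matrix ι ι ℝ} (hM : M.IsHermitian)
    (hMN : (N - M).PosSemidef) (hγN : (γ ^ 2 • (1 : Matrix ι ι ℝ) - N).PosDef) :
    (adversaryUpdate γ N - adversaryUpdate γ M).PosSemidef := by
  have hN : N.IsHermitian := by simpa using hM.add hMN.isHermitian
  have hγM : (γ ^ 2 • (1 : Matrix ι ι ℝ) - M).PosDef := by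
    simpa only [sub_add_sub_cancel] using hγN.add_posSemidef hMN
  have hFaM : (adversaryUpdate γ M).IsHermitian := by
    simpa using (adversaryUpdate_sub_self hM hγM).isHermitian.add hM
  have hFaN : (adversaryUpdate γ N).IsHermitian := by
    simpa using (adversaryUpdate_sub_self hN hγN).isHermitian.add hN
  refine PosSemidef.of_dotProduct_mulVec_nonneg (hFaN.sub hFaM) fun v => ?_
  obtain ⟨w, hw⟩ := (isGreatest_adversaryUpdate hM hγM v).1
  have hMw : (v + w) ⬝ᵥ (M *ᵥ (v + w)) ≤ (v + w) ⬝ᵥ (N *ᵥ (v + w)) := by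
    have := hMN.dotProduct_mulVec_nonneg (v + w)
    simp only [star_trivial, sub_mulVec, dotProduct_sub] at this
    linarith
  have hN_ge := (isGreatest_adversaryUpdate hN hγN v).2 ⟨w, rfl⟩
  simp only [star_trivial, sub_mulVec, dotProduct_sub, sub_nonneg]
  dsimp only at hw hN_ge
  linarith

theorem stmt_13_general (n : ℕ)
    (A Q : Matrix (Fin n) (Fin n) ℝ)
    (γ : ℝ)
    (Fa Fo : Matrix (Fin n) (Fin n) ℝ → Matrix (Fin n) (Fin n) ℝ)
    (hFa : ∀ P, Fa P = P + P * (γ ^ 2 • (1 : Matrix (Fin n) (Fin n) ℝ) - P)⁻¹ * P)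
    (hFo : ∀ P, Fo P = Aᵀ * P * A + Q)
    (M N : Matrix (Fin n) (Fin n) ℝ)
    (hM : M.PosSemidef) (hMN : (N - M).PosSemidef)
    (hγN : (γ ^ 2 • (1 : Matrix (Fin n) (Fin n) ℝ) - N).PosDef) :
    (Fa M - M).PosSemidef ∧
      (∀ x : Fin n → ℝ,
        IsGreatest
          (Set.range fun w : Fin n → ℝ =>
            (A *ᵥ x + w) ⬝ᵥ (M *ᵥ (A *ᵥ x + w)) - γ ^ 2 * (w ⬝ᵥ w))
          (x ⬝ᵥ (Fo (Fa M) *ᵥ x) - x ⬝ᵥ (Q *ᵥ x))) ∧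
      (Fo (Fa N) - Fo (Fa M)).PosSemidef := by
  obtain rfl : Fa = adversaryUpdate γ := funext hFa
  have hγM : (γ ^ 2 • (1 : Matrix (Fin n) (Fin n) ℝ) - M).PosDef := by
    simpa only [sub_add_sub_cancel] using hγN.add_posSemidef hMN
  refine ⟨adversaryUpdate_sub_self hM.isHermitian hγM, fun x => ?_, ?_⟩
  · rw [hFo, add_mulVec, dotProduct_add, add_sub_cancel_right,
      dotProduct_transpose_mul_mul_mulVec]
    exact isGreatest_adversaryUpdate hM.isHermitian hγM (A *ᵥ x)
  · rw [hFo, hFo, add_sub_add_right_eq_sub, ← Matrix.sub_mul, ← Matrix.mul_sub]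
    exact (adversaryUpdate_mono hM.isHermitian hMN hγN).transpose_mul_mul_same_s13 A

theorem stmt_13 (n : ℕ)
    (A Q : Matrix (Fin n) (Fin n) ℝ) (hQ : Q.PosSemidef)
    (γ : ℝ) (hγ : 0 < γ)
    (Fa Fo : Matrix (Fin n) (Fin n) ℝ → Matrix (Fin n) (Fin n) ℝ)
    (hFa : ∀ P, Fa P = P + P * (γ ^ 2 • (1 : Matrix (Fin n) (Fin n) ℝ) - P)⁻¹ * P)
    (hFo : ∀ P, Fo P = Aᵀ * P * A + Q)
    (M N : Matrix (Fin n) (Fin n) ℝ)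
    (hM : M.PosSemidef) (hMN : (N - M).PosSemidef)
    (hγN : (γ ^ 2 • (1 : Matrix (Fin n) (Fin n) ℝ) - N).PosDef) :
    (Fa M - M).PosSemidef ∧
      (∀ x : Fin n → ℝ,
        IsGreatest
          (Set.range fun w : Fin n → ℝ =>
            (A *ᵥ x + w) ⬝ᵥ (M *ᵥ (A *ᵥ x + w)) - γ ^ 2 * (w ⬝ᵥ w))
          (x ⬝ᵥ (Fo (Fa M) *ᵥ x) - x ⬝ᵥ (Q *ᵥ x))) ∧
      (Fo (Fa N) - Fo (Fa M)).PosSemidef :=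
  stmt_13_general n A Q γ Fa Fo hFa hFo M N hM hMN hγN
end
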